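/- arXiv:0907.4412 — 7 statements merged into one kernel-verified Lean document; each statement's English description precedes it below -/
import Mathlib

section
/- If x ∈ R is homogeneous of weight w and homogeneous of dimension d, then Q(x) is homogeneous of weight 2w and homogeneous of dimension 2d + 1 (vacuously if Q(x) = 0). -/
open MvPolynomial TensorProduct

/-- The field 𝔽₂. -/
abbrev F2 : Type := ZMod 2

/-- The polynomial ring `𝔽₂[X 0, X 1, X 2, …]`, used as a model both for
`H_*(∐ₖ Ratₖ; 𝔽₂) = 𝔽₂[g, g⁻¹Qg, Q(g⁻¹Qg), …]` (the "R" model, where `X 0 = g` and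
`X (i+1) = Qⁱ(g⁻¹Qg)`) and for `H_*(∐ₙ Bβₙ; 𝔽₂) = 𝔽₂[g, Qg, Q²g, …]`
(the "B" model, where `X i = Qⁱg`). -/
abbrev P : Type := MvPolynomial ℕ F2

/-- Weight of the variable `X i` in the braid model `B`: `wt(Qⁱg) = 2^i`. -/
def wB : ℕ → ℕ := fun i => 2 ^ i

/-- Dimension of the variable `X i` in the braid model `B`: `dim(Qⁱg) = 2^i - 1`. -/
def dB : ℕ → ℕ := fun i => 2 ^ i - 1

/-- Weight of the variable `X i` in the Rat model `R`: `wt(g) = 1`,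
`wt(Qⁱ(g⁻¹Qg)) = 2^i`. -/
def wR : ℕ → ℕ := fun i => match i with
  | 0 => 1
  | j + 1 => 2 ^ j

/-- Dimension of the variable `X i` in the Rat model `R`: `dim(g) = 0`,
`dim(Qⁱ(g⁻¹Qg)) = 2^(i+1) - 1`. -/
def dR : ℕ → ℕ := fun i => match i with
  | 0 => 0
  | j + 1 => 2 ^ (j + 1) - 1

/-- The weight (resp. dimension) of a monomial with exponent vector `m`: the sum,
with multiplicity, of the weights (resp. dimensions) `w i` of its variables. -/
def mwt (w : ℕ → ℕ) (m : ℕ →₀ ℕ) : ℕ := m.sum fun i e => e * w i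

/-- A polynomial is homogeneous of weight (resp. dimension) `n` with respect to the
variable-weight function `w` if every monomial in its support has weight
(resp. dimension) `n`. -/
def Homog (w : ℕ → ℕ) (n : ℕ) (x : P) : Prop := ∀ m ∈ x.support, mwt w m = n

/-- The 𝔽₂-linear span of the monomials of weight `n`. -/
noncomputable def spanWt (w : ℕ → ℕ) (n : ℕ) : Submodule F2 P :=
  Submodule.span F2 {p : P | ∃ m : ℕ →₀ ℕ, mwt w m = n ∧ p = monomial m 1}

/-- The image `N ⊗ M` inside `P ⊗ P` of two submodules `N, M ⊆ P`. -/
noncomputable def tensorSub (N M : Submodule F2 P) : Submodule F2 (P ⊗[F2] P) :=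
  Submodule.span F2 {t : P ⊗[F2] P | ∃ a ∈ N, ∃ b ∈ M, t = a ⊗ₜ[F2] b}

/-- `Q` is the Araki–Kudo operation on the Rat model: the 𝔽₂-linear map with
`Q(X 0) = X 0 · X 1`, `Q(X (i+1)) = X (i+2)`, and the Cartan formula
`Q(uv) = u²Q(v) + Q(u)v²`. -/
def IsQ (Q : P →ₗ[F2] P) : Prop :=
  Q (X 0) = X 0 * X 1 ∧ (∀ i : ℕ, Q (X (i + 1)) = X (i + 2)) ∧
    ∀ u v : P, Q (u * v) = u ^ 2 * Q v + Q u * v ^ 2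

/-- `ψ` is the coproduct on the braid model `B`: the 𝔽₂-algebra map with
`ψ(g) = g ⊗ g` and `ψ(Qⁱg) = g^(2^i) ⊗ Qⁱg + Qⁱg ⊗ g^(2^i)` for `i ≥ 1`. -/
def IsPsiB (ψ : P →ₐ[F2] P ⊗[F2] P) : Prop :=
  ψ (X 0) = X 0 ⊗ₜ[F2] X 0 ∧
    ∀ i : ℕ, 1 ≤ i →
      ψ (X i) = ((X 0) ^ (2 ^ i)) ⊗ₜ[F2] (X i) + (X i) ⊗ₜ[F2] ((X 0) ^ (2 ^ i))

/-- `ψ` is the coproduct on the Rat model `R` (with Araki–Kudo operation `Q`):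
the 𝔽₂-algebra map with `ψ(g) = g ⊗ g`, `ψ(g⁻¹Qg) = g ⊗ g⁻¹Qg + g⁻¹Qg ⊗ g`, and
`ψ(Qⁱ(g⁻¹Qg)) = g^(2^i) ⊗ Qⁱ(g⁻¹Qg) + Qⁱg ⊗ (g⁻¹Qg)^(2^i) + (g⁻¹Qg)^(2^i) ⊗ Qⁱg
+ Qⁱ(g⁻¹Qg) ⊗ g^(2^i)` for `i ≥ 1`, where `Qⁱg = Qⁱ(X 0)`. -/
def IsPsiR (Q : P →ₗ[F2] P) (ψ : P →ₐ[F2] P ⊗[F2] P) : Prop :=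
  ψ (X 0) = X 0 ⊗ₜ[F2] X 0 ∧
  ψ (X 1) = X 0 ⊗ₜ[F2] X 1 + X 1 ⊗ₜ[F2] X 0 ∧
  ∀ i : ℕ, 1 ≤ i →
    ψ (X (i + 1)) =
      ((X 0) ^ (2 ^ i)) ⊗ₜ[F2] (X (i + 1))
      + ((⇑Q)^[i] (X 0)) ⊗ₜ[F2] ((X 1) ^ (2 ^ i))
      + ((X 1) ^ (2 ^ i)) ⊗ₜ[F2] ((⇑Q)^[i] (X 0))
      + (X (i + 1)) ⊗ₜ[F2] ((X 0) ^ (2 ^ i))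

/-- `π` is the family of projections: `π s` is the 𝔽₂-linear endomorphism fixing
every monomial of dimension `s` (with respect to the variable-dimension function
`dimv`) and annihilating every monomial of other dimensions. -/
def IsPi (dimv : ℕ → ℕ) (π : ℕ → P →ₗ[F2] P) : Prop :=
  ∀ (s : ℕ) (m : ℕ →₀ ℕ) (c : F2),
    π s (monomial m c) = if mwt dimv m = s then monomial m c else 0

/-! The Cartan formula makes "`p` is homogeneous of degree `a` and `Q p` of degree `2a + c`"
stable under products, since both `u²Q(v)` and `Q(u)v²` land in degree `2(a + b) + c`. So it
suffices to check the generators `X i`, and linearity extends the statement to all homogeneous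
polynomials. The shift `c` is `0` for the weight grading and `1` for the dimension grading. -/

namespace MvPolynomial

variable {σ R M : Type*} [CommRing R] [AddCommMonoid M] {w : σ → M} {c : M}
  {Q : MvPolynomial σ R →ₗ[R] MvPolynomial σ R}

theorem map_one_eq_zero_of_cartan (hQ : ∀ u v, Q (u * v) = u ^ 2 * Q v + Q u * v ^ 2) :
    Q 1 = 0 := by
  have h := hQ 1 1
  simp only [one_pow, one_mul, mul_one] at h
  exact left_eq_add.mp h

theorem map_C_eq_zero_of_cartan (hQ : ∀ u v, Q (u * v) = u ^ 2 * Q v + Q u * v ^ 2) (r : R) :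
    Q (C r) = 0 := by
  rw [C_eq_smul_one, map_smul, map_one_eq_zero_of_cartan hQ, smul_zero]

theorem isWeightedHomogeneous_map_mul_of_cartan
    (hQ : ∀ u v, Q (u * v) = u ^ 2 * Q v + Q u * v ^ 2) {u v : MvPolynomial σ R} {a b : M}
    (hu : u.IsWeightedHomogeneous w a) (hv : v.IsWeightedHomogeneous w b)
    (hQu : (Q u).IsWeightedHomogeneous w (2 • a + c))
    (hQv : (Q v).IsWeightedHomogeneous w (2 • b + c)) :
    (Q (u * v)).IsWeightedHomogeneous w (2 • (a + b) + c) := by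
  rw [hQ]
  refine IsWeightedHomogeneous.add ?_ ?_
  · convert (hu.pow 2).mul hQv using 1
    rw [smul_add]; abel
  · convert hQu.mul (hv.pow 2) using 1
    rw [smul_add]; abel

theorem isWeightedHomogeneous_map_pow_of_cartan
    (hQ : ∀ u v, Q (u * v) = u ^ 2 * Q v + Q u * v ^ 2) {p : MvPolynomial σ R} {a : M}
    (hp : p.IsWeightedHomogeneous w a) (hQp : (Q p).IsWeightedHomogeneous w (2 • a + c))
    (e : ℕ) : (Q (p ^ e)).IsWeightedHomogeneous w (2 • (e • a) + c) := by
  induction e with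
  | zero => simpa [map_one_eq_zero_of_cartan hQ] using isWeightedHomogeneous_zero R w _
  | succ e ih =>
    rw [pow_succ, succ_nsmul a e]
    exact isWeightedHomogeneous_map_mul_of_cartan hQ (hp.pow e) hp ih hQp

theorem isWeightedHomogeneous_map_monomial_of_cartan
    (hQ : ∀ u v, Q (u * v) = u ^ 2 * Q v + Q u * v ^ 2)
    (hX : ∀ i, (Q (X i)).IsWeightedHomogeneous w (2 • w i + c)) (d : σ →₀ ℕ) (r : R) :
    (Q (monomial d r)).IsWeightedHomogeneous w (2 • Finsupp.weight w d + c) := by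
  induction d using Finsupp.induction with
  | zero => simpa [map_C_eq_zero_of_cartan hQ] using isWeightedHomogeneous_zero R w _
  | single_add i e d _ _ ih =>
    rw [monomial_single_add, map_add, Finsupp.weight_single]
    have hXi := isWeightedHomogeneous_X R w i
    exact isWeightedHomogeneous_map_mul_of_cartan hQ (hXi.pow e)
      (isWeightedHomogeneous_monomial w d r rfl)
      (isWeightedHomogeneous_map_pow_of_cartan hQ hXi (hX i) e) ih

theorem IsWeightedHomogeneous.map_of_cartan
    (hQ : ∀ u v, Q (u * v) = u ^ 2 * Q v + Q u * v ^ 2)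
    (hX : ∀ i, (Q (X i)).IsWeightedHomogeneous w (2 • w i + c))
    {p : MvPolynomial σ R} {m : M} (hp : p.IsWeightedHomogeneous w m) :
    (Q p).IsWeightedHomogeneous w (2 • m + c) := by
  induction hp using IsWeightedHomogeneous.induction_on with
  | zero => simpa using isWeightedHomogeneous_zero R w _
  | add p q _ _ hp hq => simpa using hp.add hq
  | monomial d r hd => exact hd ▸ isWeightedHomogeneous_map_monomial_of_cartan hQ hX d r

end MvPolynomial

theorem homog_iff_isWeightedHomogeneous (w : ℕ → ℕ) (n : ℕ) (x : P) :
    Homog w n x ↔ x.IsWeightedHomogeneous w n := by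
  have hmwt : ∀ m, mwt w m = Finsupp.weight w m := fun m => by
    simp [mwt, Finsupp.weight_apply]
  simp only [Homog, IsWeightedHomogeneous, mem_support_iff, hmwt]

theorem IsQ.isWeightedHomogeneous_wR_X {Q : P →ₗ[F2] P} (hQ : IsQ Q) (i : ℕ) :
    (Q (X i)).IsWeightedHomogeneous wR (2 * wR i) := by
  rcases i with _ | j
  · rw [hQ.1]
    exact (isWeightedHomogeneous_X F2 wR 0).mul (isWeightedHomogeneous_X F2 wR 1)
  · rw [hQ.2.1]
    convert isWeightedHomogeneous_X F2 wR (j + 2) using 1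
    simp [wR, pow_succ, mul_comm]

theorem IsQ.isWeightedHomogeneous_dR_X {Q : P →ₗ[F2] P} (hQ : IsQ Q) (i : ℕ) :
    (Q (X i)).IsWeightedHomogeneous dR (2 * dR i + 1) := by
  rcases i with _ | j
  · rw [hQ.1]
    exact (isWeightedHomogeneous_X F2 dR 0).mul (isWeightedHomogeneous_X F2 dR 1)
  · rw [hQ.2.1]
    convert isWeightedHomogeneous_X F2 dR (j + 2) using 1
    have := Nat.one_le_two_pow (n := j + 1)
    simp only [dR, pow_succ 2 (j + 1)]
    omega

/-- If `x ∈ R` is homogeneous of weight `n` and homogeneous of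
dimension `d`, then `Q(x)` is homogeneous of weight `2n` and homogeneous of
dimension `2d + 1` (vacuously if `Q(x) = 0`). -/
theorem arakiKudo_homog (Q : P →ₗ[F2] P) (hQ : IsQ Q) (x : P) (n d : ℕ)
    (hw : Homog wR n x) (hd : Homog dR d x) :
    Homog wR (2 * n) (Q x) ∧ Homog dR (2 * d + 1) (Q x) := by
  simp only [homog_iff_isWeightedHomogeneous] at hw hd ⊢
  constructor
  · simpa using hw.map_of_cartan (c := 0) hQ.2.2
      fun i => by simpa using hQ.isWeightedHomogeneous_wR_X i
  · simpa using hd.map_of_cartan hQ.2.2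
      fun i => by simpa using hQ.isWeightedHomogeneous_dR_X i
end

section
/- For every k ≥ 1: (a) ψ_B(X 0 · x) = (X 0 ⊗ X 0) · ψ_B(x) for all x ∈ B, and (b) multiplication by X 0 restricts to an 𝔽₂-linear bijection from B_{2k} onto B_{2k+1} that sends each element homogeneous of dimension d to an element homogeneous of dimension d. Consequently the coalgebras modelling H_*(Bβ_{2k}; 𝔽₂) and H_*(Bβ_{2k+1}; 𝔽₂) are isomorphic as graded coalgebras. -/
/-!
Multiplication by `g = X 0` shifts every weight by `1` and every dimension by `0`, and is
injective since `P` is a domain. It is onto `B_{2k+1}` because every variable other than `g`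
has even weight, so a monomial of odd weight contains `g` and can be divided by it. Part (a)
is multiplicativity of `ψ` together with `ψ g = g ⊗ g`.
-/

open MvPolynomial TensorProduct

lemma mwt_add (w : ℕ → ℕ) (a b : ℕ →₀ ℕ) : mwt w (a + b) = mwt w a + mwt w b :=
  Finsupp.sum_add_index' (fun _ => zero_mul _) (fun _ _ _ => add_mul _ _ _)

lemma mwt_single (w : ℕ → ℕ) (i e : ℕ) : mwt w (Finsupp.single i e) = e * w i :=
  Finsupp.sum_single_index (zero_mul _)

lemma mwt_eq_add_mwt_erase (w : ℕ → ℕ) (m : ℕ →₀ ℕ) (i : ℕ) :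
    mwt w m = m i * w i + mwt w (m.erase i) := by
  conv_lhs => rw [← Finsupp.single_add_erase i m]
  rw [mwt_add, mwt_single]

lemma two_dvd_mwt_wB_erase_zero (m : ℕ →₀ ℕ) : 2 ∣ mwt wB (m.erase 0) := by
  refine Finset.dvd_sum fun i hi => ?_
  rw [Finsupp.support_erase, Finset.mem_erase] at hi
  exact (dvd_pow_self 2 hi.1).mul_left _

lemma pos_of_odd_mwt_wB {m : ℕ →₀ ℕ} (hm : Odd (mwt wB m)) : 0 < m 0 := by
  obtain ⟨t, ht⟩ := two_dvd_mwt_wB_erase_zero m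
  obtain ⟨s, hs⟩ := hm
  have hsplit := mwt_eq_add_mwt_erase wB m 0
  simp only [wB, pow_zero, mul_one] at hsplit
  omega

lemma Homog.X_mul {w : ℕ → ℕ} {n : ℕ} {x : P} (hx : Homog w n x) (i : ℕ) :
    Homog w (w i + n) (X i * x) := by
  intro m hm
  rw [support_X_mul] at hm
  obtain ⟨m', hm', rfl⟩ := Finset.mem_map.mp hm
  rw [addLeftEmbedding_apply, mwt_add, mwt_single, one_mul, hx m' hm']

lemma X_mul_mem_spanWt {w : ℕ → ℕ} {n : ℕ} {x : P} (hx : x ∈ spanWt w n) (i : ℕ) :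
    X i * x ∈ spanWt w (w i + n) := by
  have hle : spanWt w n ≤ (spanWt w (w i + n)).comap (LinearMap.mulLeft F2 (X i)) := by
    refine Submodule.span_le.mpr ?_
    rintro _ ⟨m, hm, rfl⟩
    refine Submodule.subset_span ⟨Finsupp.single i 1 + m, ?_, ?_⟩
    · rw [mwt_add, mwt_single, hm, one_mul]
    · rw [LinearMap.mulLeft_apply, monomial_single_add, pow_one]
  exact hle hx

lemma spanWt_le_map_X_mul (w : ℕ → ℕ) (i n : ℕ)
    (hpos : ∀ m : ℕ →₀ ℕ, mwt w m = w i + n → 0 < m i) :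
    spanWt w (w i + n) ≤ (spanWt w n).map (LinearMap.mulLeft F2 (X i)) := by
  refine Submodule.span_le.mpr ?_
  rintro _ ⟨m, hm, rfl⟩
  have hsplit : Finsupp.single i 1 + (m - Finsupp.single i 1) = m :=
    add_tsub_cancel_of_le (Finsupp.single_le_iff.mpr (hpos m hm))
  refine ⟨monomial (m - Finsupp.single i 1) 1, Submodule.subset_span ⟨_, ?_, rfl⟩, ?_⟩
  · have hwt := mwt_add w (Finsupp.single i 1) (m - Finsupp.single i 1)
    rw [hsplit, hm, mwt_single, one_mul] at hwt
    omega
  · rw [LinearMap.mulLeft_apply, ← pow_one (X i), ← monomial_single_add, hsplit]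

theorem braid_even_odd_general (ψ : P →ₐ[F2] P ⊗[F2] P) (hψ : IsPsiB ψ)
    (k : ℕ) :
    (∀ x : P, ψ (X 0 * x) = (X 0 ⊗ₜ[F2] X 0) * ψ x) ∧
    (∀ x ∈ spanWt wB (2 * k), X 0 * x ∈ spanWt wB (2 * k + 1)) ∧
    (∀ x ∈ spanWt wB (2 * k), ∀ y ∈ spanWt wB (2 * k), X 0 * x = X 0 * y → x = y) ∧
    (∀ y ∈ spanWt wB (2 * k + 1), ∃ x ∈ spanWt wB (2 * k), X 0 * x = y) ∧
    (∀ (d : ℕ) (x : P), Homog dB d x → Homog dB d (X 0 * x)) := by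
  have hwt : wB 0 + 2 * k = 2 * k + 1 := by rw [wB, pow_zero, add_comm]
  refine ⟨fun x => ?_, fun x hx => ?_, fun x _ y _ h => ?_, fun y hy => ?_, fun d x hx => ?_⟩
  · rw [map_mul, hψ.1]
  · exact hwt ▸ X_mul_mem_spanWt hx 0
  · exact mul_left_cancel₀ (X_ne_zero 0) h
  · have hle := spanWt_le_map_X_mul wB 0 (2 * k) fun m hm =>
      pos_of_odd_mwt_wB ⟨k, hm.trans hwt⟩
    exact hle (hwt ▸ hy)
  · exact zero_add d ▸ hx.X_mul 0

/-- For every `k ≥ 1`: (a) `ψ_B(X 0 · x) = (X 0 ⊗ X 0) · ψ_B(x)`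
for all `x ∈ B`, and (b) multiplication by `X 0` restricts to an 𝔽₂-linear bijection
from `B_{2k}` onto `B_{2k+1}` sending elements homogeneous of dimension `d` to
elements homogeneous of dimension `d`.  (Hence `H_*(Bβ_{2k}; 𝔽₂)` and
`H_*(Bβ_{2k+1}; 𝔽₂)` are isomorphic as graded coalgebras.) -/
theorem braid_even_odd (ψ : P →ₐ[F2] P ⊗[F2] P) (hψ : IsPsiB ψ)
    (k : ℕ) (hk : 1 ≤ k) :
    (∀ x : P, ψ (X 0 * x) = (X 0 ⊗ₜ[F2] X 0) * ψ x) ∧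
    (∀ x ∈ spanWt wB (2 * k), X 0 * x ∈ spanWt wB (2 * k + 1)) ∧
    (∀ x ∈ spanWt wB (2 * k), ∀ y ∈ spanWt wB (2 * k), X 0 * x = X 0 * y → x = y) ∧
    (∀ y ∈ spanWt wB (2 * k + 1), ∃ x ∈ spanWt wB (2 * k), X 0 * x = y) ∧
    (∀ (d : ℕ) (x : P), Homog dB d x → Homog dB d (X 0 * x)) :=
  braid_even_odd_general ψ hψ k
end

section
/- Let n ≥ 1 and let J ⊆ ℕ be the set of binary digits of n, i.e. n = Σ_{j∈J} 2^j with J finite. Then every monomial in B of weight n has dimension at most n − |J|, and the unique monomial of weight n and dimension n − |J| is ∏_{j∈J} X j. (This models the fact that the top-dimensional 𝔽₂-homology group of Bβₙ is one-dimensional, spanned by ∏_{j∈J} Qʲg, in dimension n − |J|.) -/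
open MvPolynomial TensorProduct

/-!
The dimension of a monomial is its weight minus its number of factors, so the claim is that
writing `n` as a sum of powers of two takes at least `|J|` terms, with equality only for the
binary expansion itself. If some `2 ^ a` occurs twice, replacing `2 ^ a + 2 ^ a` by `2 ^ (a + 1)`
gives a sum with one term fewer; a sum without repetitions is a binary expansion of `n`, hence
runs over `J` by uniqueness of binary digits.
-/

theorem Multiset.card_lt_or_eq_val_of_sum_map_two_pow_eq {J : Finset ℕ} {s : Multiset ℕ}
    (hs : (s.map (2 ^ ·)).sum = ∑ j ∈ J, 2 ^ j) : J.card < card s ∨ s = J.val := by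
  induction hk : card s using Nat.strong_induction_on generalizing s with
  | _ k ih =>
  by_cases hnd : s.Nodup
  · right
    have hval : s.toFinset.val = s := by rw [toFinset_val, dedup_eq_self.2 hnd]
    have hJ : s.toFinset = J := by
      rw [← Finset.toFinset_bitIndices_sum_two_pow J, ← hs,
        ← Finset.toFinset_bitIndices_sum_two_pow s.toFinset, Finset.sum_eq_multiset_sum, hval]
    rw [← hJ, hval]
  · left
    obtain ⟨a, t, rfl⟩ : ∃ a t, s = a ::ₘ a ::ₘ t := by
      simpa [nodup_iff_ne_cons_cons] using hnd
    have hmerge : (((a + 1) ::ₘ t).map (2 ^ ·)).sum = ∑ j ∈ J, 2 ^ j := by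
      rw [← hs]
      simp only [map_cons, sum_cons, pow_succ]
      ring
    simp only [card_cons] at hk ⊢
    rcases ih (card t + 1) (by omega) hmerge (card_cons _ _) with hlt | heq
    · omega
    · have := congrArg card heq
      simp only [card_cons, Finset.card_val] at this
      omega

theorem mwt_eq_sum_map_toMultiset (w : ℕ → ℕ) (m : ℕ →₀ ℕ) :
    mwt w m = (m.toMultiset.map w).sum := by
  rw [Finsupp.toMultiset_apply, ← Multiset.coe_mapAddMonoidHom, map_finsuppSum,
    ← Multiset.coe_sumAddMonoidHom, map_finsuppSum]
  simp [mwt, Multiset.map_nsmul, Multiset.sum_nsmul]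

theorem mwt_add_card_toMultiset {v w : ℕ → ℕ} (hvw : ∀ i, v i + 1 = w i) (m : ℕ →₀ ℕ) :
    mwt v m + Multiset.card m.toMultiset = mwt w m := by
  simp [mwt_eq_sum_map_toMultiset, ← hvw, Multiset.sum_map_add]

theorem dB_add_one (i : ℕ) : dB i + 1 = wB i := Nat.sub_add_cancel Nat.one_le_two_pow

theorem monomial_eq_prod_X_of_toMultiset_eq {J : Finset ℕ} {m : ℕ →₀ ℕ}
    (h : m.toMultiset = J.val) : (monomial m 1 : P) = ∏ j ∈ J, X j := by
  have hJ : Finsupp.toMultiset (∑ j ∈ J, Finsupp.single j 1) = J.val := by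
    rw [Finsupp.toMultiset_sum_single, one_nsmul]
  rw [Finsupp.toMultiset_eq_iff.1 h, ← Finsupp.toMultiset_eq_iff.1 hJ]
  exact monomial_sum_one _ _

theorem braid_top_class_general (n : ℕ) (J : Finset ℕ)
    (hJ : n = ∑ j ∈ J, 2 ^ j) :
    (∀ m : ℕ →₀ ℕ, mwt wB m = n → mwt dB m ≤ n - J.card) ∧
    (∀ m : ℕ →₀ ℕ, mwt wB m = n → mwt dB m = n - J.card →
      (monomial m 1 : P) = ∏ j ∈ J, X j) := by
  have hdigits (m : ℕ →₀ ℕ) (hm : mwt wB m = n) :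
      J.card < Multiset.card m.toMultiset ∨ m.toMultiset = J.val :=
    Multiset.card_lt_or_eq_val_of_sum_map_two_pow_eq <|
      (mwt_eq_sum_map_toMultiset wB m).symm.trans (hm.trans hJ)
  refine ⟨fun m hm => ?_, fun m hm hdim => ?_⟩
  · have hsplit := mwt_add_card_toMultiset dB_add_one m
    rcases hdigits m hm with hlt | heq
    · omega
    · rw [heq, Finset.card_val] at hsplit
      omega
  · rcases hdigits m hm with hlt | heq
    · have hsplit := mwt_add_card_toMultiset dB_add_one m
      omega
    · exact monomial_eq_prod_X_of_toMultiset_eq heq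

/-- Let `n ≥ 1` with binary expansion `n = Σ_{j∈J} 2^j`.  Every
monomial in `B` of weight `n` has dimension at most `n − |J|`, and the unique
monomial of weight `n` and dimension `n − |J|` is `∏_{j∈J} X j` (the top-dimensional
𝔽₂-homology of `Bβₙ` is one-dimensional, spanned by `∏_{j∈J} Qʲg`). -/
theorem braid_top_class (n : ℕ) (hn : 1 ≤ n) (J : Finset ℕ)
    (hJ : n = ∑ j ∈ J, 2 ^ j) :
    (∀ m : ℕ →₀ ℕ, mwt wB m = n → mwt dB m ≤ n - J.card) ∧
    (∀ m : ℕ →₀ ℕ, mwt wB m = n → mwt dB m = n - J.card →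
      (monomial m 1 : P) = ∏ j ∈ J, X j) :=
  braid_top_class_general n J hJ
end

section
/- Let k ≥ 1 and let J ⊆ ℕ be the set of binary digits of k, i.e. k = Σ_{j∈J} 2^j with J finite. Then every monomial in R of weight k has dimension at most 2k − |J|, and the unique monomial of weight k and dimension 2k − |J| is ∏_{j∈J} X (j+1). (This models the fact that the top-dimensional 𝔽₂-homology group of Ratₖ is one-dimensional, spanned by ∏_{j∈J} Qʲ(g⁻¹Qg), in dimension 2k − |J|.) -/
open MvPolynomial TensorProduct

/-!
Since `dim(X (i+1)) = 2·wt(X (i+1)) − 1` and `dim(X 0) = 2·wt(X 0) − 2`, a monomial `m` of weight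
`k` has dimension `2k − deg m − m₀`. Sending `X 0` and `X (j+1)` to `2^0` and `2^j` turns `m` into a
presentation of `k` as a sum of `deg m` powers of two. Such a presentation has at least `|J|`
terms, and has exactly `|J|` only when it is the binary expansion: merging two copies of `2^j`
into one `2^(j+1)` removes a term, and a presentation without repeats is the binary one since
binary expansions are unique. So `dim m ≤ 2k − |J|`, with equality only if `m₀ = 0` and
`m = ∏_{j∈J} X (j+1)`.
-/

namespace Finsupp

lemma exists_weight_two_pow_eq_of_two_le {c : ℕ →₀ ℕ} {j : ℕ} (hj : 2 ≤ c j) :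
    ∃ c' : ℕ →₀ ℕ, weight (2 ^ ·) c' = weight (2 ^ ·) c ∧ c'.degree + 1 = c.degree := by
  obtain ⟨d, rfl⟩ : ∃ d, c = d + single j 2 :=
    ⟨c - single j 2, (tsub_add_cancel_of_le (single_le_iff.2 hj)).symm⟩
  refine ⟨d + single (j + 1) 1, ?_, ?_⟩
  · simp [weight_single, pow_succ, mul_comm]
  · simp

lemma degree_sum_single_one {σ : Type*} (s : Finset σ) :
    (∑ i ∈ s, single i 1).degree = s.card := by
  simp

lemma eq_sum_single_of_le_one {σ : Type*} {c : σ →₀ ℕ} (hc : ∀ i, c i ≤ 1) :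
    c = ∑ i ∈ c.support, single i 1 := by
  classical
  ext i
  have := hc i
  by_cases hi : c i = 0 <;> simp [finsetSum_apply, single_apply, hi]; omega

lemma eq_sum_single_of_le_one_of_weight_two_pow_eq {c : ℕ →₀ ℕ} {J : Finset ℕ}
    (hc : ∀ j, c j ≤ 1) (h : weight (2 ^ ·) c = ∑ j ∈ J, 2 ^ j) :
    c = ∑ j ∈ J, single j 1 := by
  have hc' := eq_sum_single_of_le_one hc
  have hsupp : c.support = J := Finset.geomSum_injective le_rfl <| by
    change ∑ j ∈ c.support, 2 ^ j = ∑ j ∈ J, 2 ^ j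
    rw [← h]
    conv_rhs => rw [hc']
    simp [weight_single]
  rwa [hsupp] at hc'

theorem card_le_degree_of_weight_two_pow_eq {c : ℕ →₀ ℕ} {J : Finset ℕ}
    (h : weight (2 ^ ·) c = ∑ j ∈ J, 2 ^ j) : J.card ≤ c.degree := by
  induction hd : c.degree using Nat.strong_induction_on generalizing c with
  | _ n ih =>
    by_cases hc : ∃ j, 2 ≤ c j
    · obtain ⟨j, hj⟩ := hc
      obtain ⟨c', hw, hdeg⟩ := exists_weight_two_pow_eq_of_two_le hj
      have := ih _ (by omega) (hw.trans h) rfl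
      omega
    · push Not at hc
      rw [← hd, eq_sum_single_of_le_one_of_weight_two_pow_eq (fun j ↦ Nat.le_of_lt_succ (hc j)) h,
        degree_sum_single_one]

theorem eq_sum_single_of_weight_two_pow_eq_of_degree_eq {c : ℕ →₀ ℕ} {J : Finset ℕ}
    (h : weight (2 ^ ·) c = ∑ j ∈ J, 2 ^ j) (hdeg : c.degree = J.card) :
    c = ∑ j ∈ J, single j 1 := by
  refine eq_sum_single_of_le_one_of_weight_two_pow_eq (fun j ↦ ?_) h
  by_contra! hj
  obtain ⟨c', hw, hdeg'⟩ := exists_weight_two_pow_eq_of_two_le hj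
  have := card_le_degree_of_weight_two_pow_eq (hw.trans h)
  omega

end Finsupp

open Finsupp

lemma mwt_eq_weight (w : ℕ → ℕ) (m : ℕ →₀ ℕ) : mwt w m = weight w m := rfl

lemma weight_two_pow_mapDomain_pred (m : ℕ →₀ ℕ) :
    weight (2 ^ ·) (m.mapDomain (· - 1)) = mwt wR m := by
  rw [mwt_eq_weight]
  simp only [weight, LinearMap.toAddMonoidHom_coe, linearCombination_mapDomain]
  congr 2
  funext i
  cases i <;> rfl

lemma mwt_dR_add_degree_add_apply_zero (m : ℕ →₀ ℕ) :
    mwt dR m + m.degree + m 0 = 2 * mwt wR m := by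
  simp only [mwt_eq_weight]
  induction m using Finsupp.induction_linear with
  | zero => simp
  | add f g hf hg =>
    simp only [map_add, Finsupp.add_apply]
    omega
  | single i n =>
    rcases i with _ | j
    · simp only [weight_single, dR, wR, degree_single, single_eq_same, smul_eq_mul, mul_zero,
        mul_one, zero_add]
      ring
    · simp only [weight_single, dR, wR, smul_eq_mul, single_apply, degree_single,
        Nat.add_eq_zero_iff, one_ne_zero, and_false, ↓reduceIte, add_zero]
      rw [Nat.mul_sub_one, Nat.sub_add_cancel (Nat.le_mul_of_pos_right n (by positivity)), pow_succ]
      ring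

lemma card_le_degree_of_mwt_wR_eq {m : ℕ →₀ ℕ} {J : Finset ℕ}
    (h : mwt wR m = ∑ j ∈ J, 2 ^ j) : J.card ≤ m.degree := by
  simpa using card_le_degree_of_weight_two_pow_eq ((weight_two_pow_mapDomain_pred m).trans h)

lemma eq_sum_single_succ_of_mwt_wR_eq {m : ℕ →₀ ℕ} {J : Finset ℕ}
    (h : mwt wR m = ∑ j ∈ J, 2 ^ j) (hdeg : m.degree = J.card) (h0 : m 0 = 0) :
    m = ∑ j ∈ J, single (j + 1) 1 := by
  have hc := eq_sum_single_of_weight_two_pow_eq_of_degree_eq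
    ((weight_two_pow_mapDomain_pred m).trans h) (by simpa using hdeg)
  calc m = (m.mapDomain (· - 1)).mapDomain (· + 1) := by
        rw [← mapDomain_comp]
        conv_lhs => rw [← mapDomain_id (v := m)]
        refine mapDomain_congr fun i hi ↦ ?_
        have : i ≠ 0 := by
          rintro rfl
          simp [h0] at hi
        simp only [Function.comp_apply, id_eq]
        omega
    _ = ∑ j ∈ J, single (j + 1) 1 := by
        rw [hc, mapDomain_finsetSum]
        simp

theorem rat_top_class_general (k : ℕ) (J : Finset ℕ)
    (hJ : k = ∑ j ∈ J, 2 ^ j) :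
    (∀ m : ℕ →₀ ℕ, mwt wR m = k → mwt dR m ≤ 2 * k - J.card) ∧
    (∀ m : ℕ →₀ ℕ, mwt wR m = k → mwt dR m = 2 * k - J.card →
      (monomial m 1 : P) = ∏ j ∈ J, X (j + 1)) := by
  refine ⟨fun m hm ↦ ?_, fun m hm hdim ↦ ?_⟩
  · have := card_le_degree_of_mwt_wR_eq (hm.trans hJ)
    have := mwt_dR_add_degree_add_apply_zero m
    omega
  · have := card_le_degree_of_mwt_wR_eq (hm.trans hJ)
    have := mwt_dR_add_degree_add_apply_zero m
    rw [eq_sum_single_succ_of_mwt_wR_eq (hm.trans hJ) (by omega) (by omega), monomial_sum_one]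
    rfl

/-- Let `k ≥ 1` with binary expansion `k = Σ_{j∈J} 2^j`.  Every
monomial in `R` of weight `k` has dimension at most `2k − |J|`, and the unique
monomial of weight `k` and dimension `2k − |J|` is `∏_{j∈J} X (j+1)` (the
top-dimensional 𝔽₂-homology of `Ratₖ` is one-dimensional, spanned by
`∏_{j∈J} Qʲ(g⁻¹Qg)`). -/
theorem rat_top_class (k : ℕ) (hk : 1 ≤ k) (J : Finset ℕ)
    (hJ : k = ∑ j ∈ J, 2 ^ j) :
    (∀ m : ℕ →₀ ℕ, mwt wR m = k → mwt dR m ≤ 2 * k - J.card) ∧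
    (∀ m : ℕ →₀ ℕ, mwt wR m = k → mwt dR m = 2 * k - J.card →
      (monomial m 1 : P) = ∏ j ∈ J, X (j + 1)) :=
  rat_top_class_general k J hJ
end

section
/- Let J ⊆ ℕ be a finite set and let r ≥ 1 be an integer with r ∈ J and r − 1 ∉ J. Then there is no subset J′ ⊆ J with Σ_{j∈J′} (2^(j+1) − 1) = 2^r − 1. -/
open MvPolynomial TensorProduct

open Finset

lemma sum_two_pow_succ_sub_one_lt {s : Finset ℕ} {k : ℕ} (hs : ∀ j ∈ s, j < k) :
    ∑ j ∈ s, (2 ^ (j + 1) - 1) < 2 ^ (k + 1) - 1 := by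
  have hgeom : ∑ j ∈ s, 2 ^ j < 2 ^ k := Nat.geomSum_lt le_rfl hs
  calc ∑ j ∈ s, (2 ^ (j + 1) - 1)
      ≤ ∑ j ∈ s, 2 ^ (j + 1) := sum_le_sum fun _ _ => Nat.sub_le _ _
    _ = 2 * ∑ j ∈ s, 2 ^ j := by rw [mul_sum]; simp only [pow_succ']
    _ < 2 ^ (k + 1) - 1 := by rw [pow_succ']; omega

lemma lt_of_two_pow_succ_sub_one_le {j r : ℕ} (h : 2 ^ (j + 1) - 1 ≤ 2 ^ r - 1) : j < r := by
  have hpow : 2 ^ (j + 1) ≤ 2 ^ r := by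
    have := Nat.one_le_two_pow (n := j + 1)
    omega
  exact Nat.succ_le_iff.mp ((Nat.pow_le_pow_iff_right Nat.one_lt_two).mp hpow)

theorem no_subset_sum_mersenne_general (J : Finset ℕ) (r : ℕ) (hr : 1 ≤ r)
    (hrpred : r - 1 ∉ J) :
    ¬ ∃ J' ⊆ J, ∑ j ∈ J', (2 ^ (j + 1) - 1) = 2 ^ r - 1 := by
  rintro ⟨J', hJ', hsum⟩
  -- A term with `j ≥ r` alone exceeds `2^r - 1`, and `j = r - 1` is excluded.
  have hlt : ∀ j ∈ J', j < r - 1 := by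
    intro j hj
    have hle : 2 ^ (j + 1) - 1 ≤ 2 ^ r - 1 :=
      hsum ▸ single_le_sum (f := fun j => 2 ^ (j + 1) - 1) (fun _ _ => Nat.zero_le _) hj
    have hjr := lt_of_two_pow_succ_sub_one_le hle
    have hne : j ≠ r - 1 := fun h => hrpred (h ▸ hJ' hj)
    omega
  have hsum_lt := sum_two_pow_succ_sub_one_lt hlt
  rw [Nat.sub_add_cancel hr] at hsum_lt
  omega

/-- Let `J ⊆ ℕ` be finite and `r ≥ 1` with `r ∈ J` and
`r − 1 ∉ J`.  Then no subset `J′ ⊆ J` satisfies `Σ_{j∈J′} (2^(j+1) − 1) = 2^r − 1`. -/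
theorem no_subset_sum_mersenne (J : Finset ℕ) (r : ℕ) (hr : 1 ≤ r)
    (hrJ : r ∈ J) (hrpred : r - 1 ∉ J) :
    ¬ ∃ J' ⊆ J, ∑ j ∈ J', (2 ^ (j + 1) - 1) = 2 ^ r - 1 :=
  no_subset_sum_mersenne_general J r hr hrpred
end

section
/- Let r ≥ 1 and let x = ∏_{j=0}^{r} X (j+1) ∈ R (the top class of H_*(Ratₖ; 𝔽₂) for k = 2^(r+1) − 1). Then (π_2 ⊗ id)(ψ_R(x)) = 0; that is, 2 ∉ S(x): the two terms of ψ_R(x) in first-factor dimension 2 cancel over 𝔽₂. -/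
open MvPolynomial TensorProduct

/-!
The projection `π₂ ⊗ id` only sees first tensor factors of dimension `2`, so it factors through
the algebra map that reduces the first factor modulo the ideal of polynomials of dimension `≥ 3`;
being multiplicative, this map can be applied factor by factor to `ψ x = ∏ ψ (X (j + 1))`.
By the Cartan formula `Qⁱ g` is homogeneous of dimension `2ⁱ - 1`, so modulo this truncation
`ψ (X (j + 1)) ≡ g^(2^j) ⊗ X (j + 1)` for `j ≥ 2` and `ψ (X 2)` loses its last term. What remains
is `ψ (X 1) · ψ (X 2) · (g^N ⊗ y)`, whose only two terms of first-factor dimension `2` are both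
`g^(N+1) (X 1)² ⊗ g (X 1)² y` and cancel over `𝔽₂`.
-/

namespace MvPolynomial

variable {σ R : Type*} [CommSemiring R]

lemma isUpperSet_setOf_le_weight (w : σ → ℕ) (n : ℕ) :
    IsUpperSet {d : σ →₀ ℕ | n ≤ Finsupp.weight w d} := by
  intro a b hab (ha : n ≤ Finsupp.weight w a)
  change n ≤ Finsupp.weight w b
  rw [← tsub_add_cancel_of_le hab, map_add]
  omega

variable (R) in
noncomputable def weightAtLeast (w : σ → ℕ) (n : ℕ) : Ideal (MvPolynomial σ R) :=
  restrictSupportIdeal R {d | n ≤ Finsupp.weight w d} (isUpperSet_setOf_le_weight w n)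

lemma mem_weightAtLeast_iff {w : σ → ℕ} {n : ℕ} {p : MvPolynomial σ R} :
    p ∈ weightAtLeast R w n ↔ ∀ d, coeff d p ≠ 0 → n ≤ Finsupp.weight w d :=
  ⟨fun hp _ hd => hp (mem_support_iff.2 hd), fun hp d hd => hp d (mem_support_iff.1 hd)⟩

lemma IsWeightedHomogeneous.mem_weightAtLeast {w : σ → ℕ} {n m : ℕ} {p : MvPolynomial σ R}
    (hp : p.IsWeightedHomogeneous w m) (hnm : n ≤ m) : p ∈ weightAtLeast R w n :=
  mem_weightAtLeast_iff.2 fun _ hd => hp hd ▸ hnm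

lemma weightedHomogeneousComponent_eq_zero_of_mem_weightAtLeast {w : σ → ℕ} {n s : ℕ}
    (hs : s < n) {p : MvPolynomial σ R} (hp : p ∈ weightAtLeast R w n) :
    weightedHomogeneousComponent w s p = 0 := by
  classical
  ext d
  rw [coeff_weightedHomogeneousComponent, coeff_zero]
  split_ifs with hd
  · by_contra h
    have := mem_weightAtLeast_iff.1 hp d h
    omega
  · rfl

end MvPolynomial

open MvPolynomial

lemma IsPi.eq_weightedHomogeneousComponent {π : ℕ → P →ₗ[F2] P} (hπ : IsPi dR π) (s : ℕ) :
    π s = weightedHomogeneousComponent dR s := by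
  classical
  refine linearMap_ext fun m => LinearMap.ext fun c => ?_
  rw [LinearMap.comp_apply, LinearMap.comp_apply, hπ s m c,
    weightedHomogeneousComponent_of_mem (isWeightedHomogeneous_monomial dR m c rfl)]
  exact if_congr eq_comm rfl rfl

lemma IsPi.apply_eq_zero_of_isWeightedHomogeneous {π : ℕ → P →ₗ[F2] P} (hπ : IsPi dR π)
    {s d : ℕ} {p : P} (hp : p.IsWeightedHomogeneous dR d) (hsd : s ≠ d) : π s p = 0 := by
  rw [hπ.eq_weightedHomogeneousComponent]
  exact hp.weightedHomogeneousComponent_ne s hsd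

namespace IsQ

variable {Q : P →ₗ[F2] P} (hQ : IsQ Q)
include hQ

lemma map_one : Q 1 = 0 := by
  simpa using hQ.2.2 1 1

lemma isWeightedHomogeneous_apply_mul {u v : P} {a b : ℕ}
    (hu : u.IsWeightedHomogeneous dR a) (hv : v.IsWeightedHomogeneous dR b)
    (hQu : (Q u).IsWeightedHomogeneous dR (2 * a + 1))
    (hQv : (Q v).IsWeightedHomogeneous dR (2 * b + 1)) :
    (Q (u * v)).IsWeightedHomogeneous dR (2 * (a + b) + 1) := by
  rw [hQ.2.2]
  refine IsWeightedHomogeneous.add ?_ ?_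
  · convert (hu.pow 2).mul hQv using 1; rw [smul_eq_mul]; ring
  · convert hQu.mul (hv.pow 2) using 1; rw [smul_eq_mul]; ring

lemma isWeightedHomogeneous_apply_X (i : ℕ) :
    (Q (X i)).IsWeightedHomogeneous dR (2 * dR i + 1) := by
  rcases i with _ | j
  · rw [hQ.1]
    exact (isWeightedHomogeneous_X F2 dR 0).mul (isWeightedHomogeneous_X F2 dR 1)
  · rw [hQ.2.1 j]
    convert isWeightedHomogeneous_X F2 dR (j + 2) using 1
    simp only [dR, pow_succ]
    have := Nat.one_le_two_pow (n := j)
    omega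

lemma isWeightedHomogeneous_apply_X_pow (i e : ℕ) :
    (Q (X i ^ e)).IsWeightedHomogeneous dR (2 * (e * dR i) + 1) := by
  induction e with
  | zero => simpa [hQ.map_one] using isWeightedHomogeneous_zero F2 dR 1
  | succ e ih =>
    rw [pow_succ, add_mul, one_mul]
    exact hQ.isWeightedHomogeneous_apply_mul
      (by simpa using (isWeightedHomogeneous_X F2 dR i).pow e)
      (isWeightedHomogeneous_X F2 dR i) ih (hQ.isWeightedHomogeneous_apply_X i)

lemma isWeightedHomogeneous_apply_monomial (m : ℕ →₀ ℕ) :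
    (Q (monomial m 1)).IsWeightedHomogeneous dR (2 * Finsupp.weight dR m + 1) := by
  induction m using Finsupp.induction with
  | zero => simpa [hQ.map_one] using isWeightedHomogeneous_zero F2 dR 1
  | single_add i e f _ _ ih =>
    rw [← one_mul (1 : F2), ← monomial_mul, ← X_pow_eq_monomial, map_add,
      Finsupp.weight_single, smul_eq_mul]
    exact hQ.isWeightedHomogeneous_apply_mul
      (by simpa using (isWeightedHomogeneous_X F2 dR i).pow e)
      (isWeightedHomogeneous_monomial dR f 1 rfl) (hQ.isWeightedHomogeneous_apply_X_pow i e) ih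

lemma isWeightedHomogeneous_apply {p : P} {d : ℕ} (hp : p.IsWeightedHomogeneous dR d) :
    (Q p).IsWeightedHomogeneous dR (2 * d + 1) := by
  induction hp using IsWeightedHomogeneous.induction_on with
  | zero => simpa using isWeightedHomogeneous_zero F2 dR _
  | add p q _ _ hp hq => simpa using hp.add hq
  | monomial m c hm =>
    rw [← mul_one c, ← smul_eq_mul, ← smul_monomial, map_smul, ← hm]
    exact (weightedHomogeneousSubmodule F2 dR _).smul_mem c
      (hQ.isWeightedHomogeneous_apply_monomial m)

lemma isWeightedHomogeneous_iterate_X_zero (i : ℕ) :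
    ((⇑Q)^[i] (X 0)).IsWeightedHomogeneous dR (2 ^ i - 1) := by
  induction i with
  | zero => exact isWeightedHomogeneous_X F2 dR 0
  | succ i ih =>
    rw [Function.iterate_succ_apply']
    convert hQ.isWeightedHomogeneous_apply ih using 1
    have := Nat.one_le_two_pow (n := i)
    rw [pow_succ]
    omega

end IsQ

lemma Algebra.TensorProduct.prod_tmul_prod {R A B ι : Type*} [CommSemiring R]
    [CommSemiring A] [Algebra R A] [CommSemiring B] [Algebra R B]
    (s : Finset ι) (f : ι → A) (g : ι → B) :
    ∏ i ∈ s, f i ⊗ₜ[R] g i = (∏ i ∈ s, f i) ⊗ₜ[R] (∏ i ∈ s, g i) := by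
  classical
  induction s using Finset.induction_on with
  | empty => rfl
  | insert i s hi ih => simp only [Finset.prod_insert hi, ih, tmul_mul_tmul]

lemma TensorProduct.map_eq_of_map_quotient_eq {R A B M : Type*} [CommRing R] [CommRing A]
    [Algebra R A] [Semiring B] [Algebra R B] [AddCommGroup M] [Module R M] {I : Ideal A}
    (f : A →ₗ[R] M) (hf : ∀ a ∈ I, f a = 0) {t t' : A ⊗[R] B}
    (h : Algebra.TensorProduct.map (Ideal.Quotient.mkₐ R I) (AlgHom.id R B) t =
      Algebra.TensorProduct.map (Ideal.Quotient.mkₐ R I) (AlgHom.id R B) t') :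
    TensorProduct.map f LinearMap.id t = TensorProduct.map f LinearMap.id t' := by
  let g : A ⧸ I →ₗ[R] M := (I.restrictScalars R).liftQ f hf ∘ₗ
    (Submodule.Quotient.restrictScalarsEquiv R I).symm.toLinearMap
  have factor : ∀ u : A ⊗[R] B, TensorProduct.map f LinearMap.id u =
      TensorProduct.map g LinearMap.id
        (Algebra.TensorProduct.map (Ideal.Quotient.mkₐ R I) (AlgHom.id R B) u) := by
    intro u
    induction u using TensorProduct.induction_on with
    | zero => simp
    | tmul a b => rfl
    | add u v hu hv => simp only [map_add, hu, hv]
  rw [factor, factor, h]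

noncomputable def truncateLeft : P ⊗[F2] P →ₐ[F2] (P ⧸ weightAtLeast F2 dR 3) ⊗[F2] P :=
  Algebra.TensorProduct.map (Ideal.Quotient.mkₐ F2 _) (AlgHom.id F2 P)

lemma truncateLeft_tmul_eq_zero {a : P} {d : ℕ} (ha : a.IsWeightedHomogeneous dR d)
    (hd : 3 ≤ d) (b : P) : truncateLeft (a ⊗ₜ b) = 0 := by
  simp [truncateLeft, Ideal.Quotient.eq_zero_iff_mem.2 (ha.mem_weightAtLeast hd)]

lemma IsPi.map_eq_of_truncateLeft_eq {π : ℕ → P →ₗ[F2] P} (hπ : IsPi dR π) {t t' : P ⊗[F2] P}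
    (h : truncateLeft t = truncateLeft t') :
    TensorProduct.map (π 2) LinearMap.id t = TensorProduct.map (π 2) LinearMap.id t' := by
  refine TensorProduct.map_eq_of_map_quotient_eq _ (fun a ha => ?_) h
  rw [hπ.eq_weightedHomogeneousComponent]
  exact weightedHomogeneousComponent_eq_zero_of_mem_weightAtLeast (by norm_num) ha

namespace IsPsiR

variable {Q : P →ₗ[F2] P} {ψ : P →ₐ[F2] P ⊗[F2] P} (hQ : IsQ Q) (hψ : IsPsiR Q ψ)
include hQ hψ

lemma truncateLeft_apply_X_two :
    truncateLeft (ψ (X 2)) =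
      truncateLeft ((X 0 ^ 2) ⊗ₜ[F2] X 2 + (X 0 * X 1) ⊗ₜ[F2] (X 1 ^ 2) +
        (X 1 ^ 2) ⊗ₜ[F2] (X 0 * X 1)) := by
  have h := hψ.2.2 1 le_rfl
  simp only [Function.iterate_one, hQ.1, pow_one] at h
  rw [h, map_add _ _ (X 2 ⊗ₜ _), truncateLeft_tmul_eq_zero (isWeightedHomogeneous_X F2 dR 2)
    (by decide), add_zero]

lemma truncateLeft_apply_X_add_three (j : ℕ) :
    truncateLeft (ψ (X (j + 3))) = truncateLeft ((X 0 ^ 2 ^ (j + 2)) ⊗ₜ[F2] X (j + 3)) := by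
  have h4 : 4 ≤ 2 ^ (j + 2) := by
    rw [pow_add]; have := Nat.one_le_two_pow (n := j); omega
  rw [hψ.2.2 (j + 2) (by omega), map_add, map_add, map_add,
    truncateLeft_tmul_eq_zero (hQ.isWeightedHomogeneous_iterate_X_zero _) (by omega),
    truncateLeft_tmul_eq_zero ((isWeightedHomogeneous_X F2 dR 1).pow _) (by simp [dR]; omega),
    truncateLeft_tmul_eq_zero (isWeightedHomogeneous_X F2 dR _)
      (by show 3 ≤ 2 ^ (j + 2 + 1) - 1; rw [pow_succ]; omega)]
  simp

end IsPsiR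

lemma IsPi.map_pi_two_psi_X_one_mul_eq_zero {π : ℕ → P →ₗ[F2] P} (hπ : IsPi dR π)
    (n : ℕ) (y : P) :
    TensorProduct.map (π 2) LinearMap.id
      ((X 0 ⊗ₜ[F2] X 1 + X 1 ⊗ₜ[F2] X 0) *
        ((X 0 ^ 2) ⊗ₜ[F2] X 2 + (X 0 * X 1) ⊗ₜ[F2] (X 1 ^ 2) + (X 1 ^ 2) ⊗ₜ[F2] (X 0 * X 1)) *
        ((X 0 ^ n) ⊗ₜ[F2] y)) = 0 := by
  set A : P ⊗[F2] P := X 0 ⊗ₜ[F2] X 1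
  set B : P ⊗[F2] P := X 1 ⊗ₜ[F2] X 0
  set C : P ⊗[F2] P := (X 0 * X 1) ⊗ₜ[F2] (X 1 ^ 2)
  set D : P ⊗[F2] P := (X 1 ^ 2) ⊗ₜ[F2] (X 0 * X 1)
  -- the only two products of first-factor dimension 2, equal and hence cancelling over 𝔽₂
  have hpair : A * D + B * C = 0 := by
    rw [Algebra.TensorProduct.tmul_mul_tmul, Algebra.TensorProduct.tmul_mul_tmul,
      show (X 1 * (X 0 * X 1) : P) = X 0 * X 1 ^ 2 by ring, ← two_smul F2,
      show (2 : F2) = 0 from rfl, zero_smul]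
  have hexpand : (A + B) * ((X 0 ^ 2) ⊗ₜ[F2] X 2 + C + D) =
      A * (X 0 ^ 2) ⊗ₜ[F2] X 2 + A * C + B * (X 0 ^ 2) ⊗ₜ[F2] X 2 + B * D + (A * D + B * C) := by
    ring
  have h0 := isWeightedHomogeneous_X F2 dR 0
  have h1 := isWeightedHomogeneous_X F2 dR 1
  have hn := h0.pow n
  have hπ2 {p : P} {d : ℕ} (hp : p.IsWeightedHomogeneous dR d) (hd : d ≠ 2) : π 2 p = 0 :=
    hπ.apply_eq_zero_of_isWeightedHomogeneous hp hd.symm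
  rw [hexpand, hpair, add_zero]
  simp only [A, B, C, D, add_mul, Algebra.TensorProduct.tmul_mul_tmul, map_add,
    TensorProduct.map_tmul,
    hπ2 ((h0.mul (h0.pow 2)).mul hn) (by simp [dR]),
    hπ2 ((h0.mul (h0.mul h1)).mul hn) (by simp [dR]),
    hπ2 ((h1.mul (h0.pow 2)).mul hn) (by simp [dR]),
    hπ2 ((h1.mul (h1.pow 2)).mul hn) (by simp [dR]),
    TensorProduct.zero_tmul, add_zero]

/-- Let `r ≥ 1` and `x = ∏_{j=0}^{r} X (j+1) ∈ R` (the top class of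
`H_*(Ratₖ; 𝔽₂)` for `k = 2^(r+1) − 1`).  Then `(π_2 ⊗ id)(ψ_R(x)) = 0`, i.e.
`2 ∉ S(x)`: the two terms of `ψ_R(x)` in first-factor dimension `2` cancel over 𝔽₂. -/
theorem psiR_dim_two_component_vanishes (r : ℕ) (hr : 1 ≤ r)
    (Q : P →ₗ[F2] P) (hQ : IsQ Q)
    (ψ : P →ₐ[F2] P ⊗[F2] P) (hψ : IsPsiR Q ψ)
    (π : ℕ → P →ₗ[F2] P) (hπ : IsPi dR π)
    (x : P) (hx : x = ∏ j ∈ Finset.range (r + 1), X (j + 1)) :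
    TensorProduct.map (π 2) (LinearMap.id : P →ₗ[F2] P) (ψ x) = 0 := by
  obtain ⟨k, rfl⟩ : ∃ k, r = k + 1 := ⟨r - 1, by omega⟩
  have hsplit : x = X 1 * X 2 * ∏ j ∈ Finset.range k, X (j + 3) := by
    rw [hx, Finset.prod_range_succ', Finset.prod_range_succ']
    ring
  have htrunc : truncateLeft (ψ x) = truncateLeft (ψ (X 1) *
      ((X 0 ^ 2) ⊗ₜ[F2] X 2 + (X 0 * X 1) ⊗ₜ[F2] (X 1 ^ 2) + (X 1 ^ 2) ⊗ₜ[F2] (X 0 * X 1)) *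
      ∏ j ∈ Finset.range k, (X 0 ^ 2 ^ (j + 2)) ⊗ₜ[F2] X (j + 3)) := by
    -- instance search does not find `MonoidHomClass` for this `AlgHom`, so use its ring hom
    have hmap (f : ℕ → P ⊗[F2] P) : truncateLeft (∏ j ∈ Finset.range k, f j) =
        ∏ j ∈ Finset.range k, truncateLeft (f j) :=
      map_prod truncateLeft.toRingHom f _
    simp only [hsplit, map_mul, map_prod ψ, hmap, hψ.truncateLeft_apply_X_two hQ,
      hψ.truncateLeft_apply_X_add_three hQ]
  rw [hπ.map_eq_of_truncateLeft_eq htrunc, hψ.2.1, Algebra.TensorProduct.prod_tmul_prod,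
    Finset.prod_pow_eq_pow_sum]
  exact hπ.map_pi_two_psi_X_one_mul_eq_zero _ _
end

section
/- There exists an 𝔽₂-linear map Φ : R → B such that (i) Φ restricted to A₃ is injective with image B₆, (ii) for every d, Φ sends each element of A₃ homogeneous of dimension d to an element of B homogeneous of dimension d, and (iii) ψ_B(Φ(x)) = (Φ ⊗ Φ)(ψ_R(x)) for all x ∈ A₃. (This models the statement that H_*(Rat₃; 𝔽₂) and H_*(Bβ₆; 𝔽₂) are isomorphic as graded coalgebras, hence Rat₃, Bβ₆ and C₃ have isomorphic 𝔽₂-cohomology rings.) -/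
open MvPolynomial TensorProduct

/-
`Φ` is built from `θ : g ↦ g²` (the other generators fixed), which sends a monomial `gᵃu` with `u`
free of `g` to `g²ᵃu`: it doubles weight, preserves dimension and, because a monomial of even braid
weight has even `g`-exponent, maps `Aₙ` isomorphically onto `B₂ₙ`. `θ` commutes with the coproducts
on `g` and `g⁻¹Qg`, hence on every `gᵃ(g⁻¹Qg)ᵇ`, but not on `Q(g⁻¹Qg)`: the coproduct of
`Q(g⁻¹Qg)` carries the cross terms `g(g⁻¹Qg) ⊗ (g⁻¹Qg)² + (g⁻¹Qg)² ⊗ g(g⁻¹Qg)`, which that of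
`Q²g` lacks. In weight 3 this is repaired by following `θ` with the transvection
`y ↦ y + c(y)·(Qg)³`, where `c(y)` is the coefficient of `g²Q²g = θ(g·Q(g⁻¹Qg))` in `y`; it is
invertible and preserves weight and dimension, since `g²Q²g` and `(Qg)³` share both. The two
monomials of `A₃` involving `Q(g⁻¹Qg)` are then checked by direct computation in characteristic 2.
-/

namespace MvPolynomial

variable {σ R M : Type*} [CommRing R] [AddCommMonoid M] {w : σ → M} {m : σ →₀ ℕ}
  {v : MvPolynomial σ R}

lemma IsWeightedHomogeneous.transvection_lcoeff
    (hv : IsWeightedHomogeneous w v (Finsupp.weight w m)) {y : MvPolynomial σ R} {n : M}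
    (hy : IsWeightedHomogeneous w y n) :
    IsWeightedHomogeneous w (LinearMap.transvection (lcoeff R m) v y) n := by
  rw [LinearMap.transvection.apply, lcoeff_apply]
  by_cases h : coeff m y = 0
  · simpa [h] using hy
  · rw [hy h] at hv
    exact hy.add ((weightedHomogeneousSubmodule R w n).smul_mem _ hv)

lemma map_transvection_weightedHomogeneousSubmodule (h : lcoeff R m v = 0)
    (hv : IsWeightedHomogeneous w v (Finsupp.weight w m)) (n : M) :
    (weightedHomogeneousSubmodule R w n).map
        (LinearEquiv.transvection h : MvPolynomial σ R →ₗ[R] MvPolynomial σ R) =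
      weightedHomogeneousSubmodule R w n := by
  refine le_antisymm ?_ fun y hy => ?_
  · rintro _ ⟨y, hy, rfl⟩
    exact hv.transvection_lcoeff hy
  · rw [Submodule.map_equiv_eq_comap_symm, Submodule.mem_comap,
      LinearEquiv.transvection.symm_eq h (by rw [map_neg, h, neg_zero])]
    exact hv.neg.transvection_lcoeff hy

end MvPolynomial

lemma IsPsiB.map_X_one {ψB : P →ₐ[F2] P ⊗[F2] P} (hψB : IsPsiB ψB) :
    ψB (X 1) = (X 0 ^ 2) ⊗ₜ[F2] X 1 + X 1 ⊗ₜ[F2] (X 0 ^ 2) := by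
  simpa using hψB.2 1 le_rfl

lemma IsPsiB.map_X_two {ψB : P →ₐ[F2] P ⊗[F2] P} (hψB : IsPsiB ψB) :
    ψB (X 2) = (X 0 ^ 4) ⊗ₜ[F2] X 2 + X 2 ⊗ₜ[F2] (X 0 ^ 4) := by
  simpa using hψB.2 2 one_le_two

lemma IsPsiR.map_X_two {Q : P →ₗ[F2] P} {ψR : P →ₐ[F2] P ⊗[F2] P} (hQ : IsQ Q)
    (hψR : IsPsiR Q ψR) :
    ψR (X 2) = (X 0 ^ 2) ⊗ₜ[F2] X 2 + (X 0 * X 1) ⊗ₜ[F2] (X 1 ^ 2)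
      + (X 1 ^ 2) ⊗ₜ[F2] (X 0 * X 1) + X 2 ⊗ₜ[F2] (X 0 ^ 2) := by
  simpa [hQ.1] using hψR.2.2 1 le_rfl

namespace RatBraid

open Finsupp

lemma mwt_eq_weight (w : ℕ → ℕ) : mwt w = weight w := by
  ext m
  simp [mwt, weight_apply]

lemma homog_iff_isWeightedHomogeneous {w : ℕ → ℕ} {n : ℕ} {x : P} :
    Homog w n x ↔ IsWeightedHomogeneous w x n := by
  simp [Homog, IsWeightedHomogeneous, mwt_eq_weight]

lemma weightedHomogeneousSubmodule_eq_span (w : ℕ → ℕ) (n : ℕ) :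
    weightedHomogeneousSubmodule F2 w n =
      Submodule.span F2 ((monomial · 1) '' {m : ℕ →₀ ℕ | weight w m = n}) := by
  rw [weightedHomogeneousSubmodule_eq_finsupp_supported, ← restrictSupport, restrictSupport_eq_span]

lemma spanWt_eq_weightedHomogeneousSubmodule (w : ℕ → ℕ) (n : ℕ) :
    spanWt w n = weightedHomogeneousSubmodule F2 w n := by
  rw [weightedHomogeneousSubmodule_eq_span, spanWt, mwt_eq_weight]
  congr 1
  ext p
  simp [eq_comm]

lemma dB_eq_dR : dB = dR := by
  ext (_ | _) <;> rfl

lemma weight_wB_add_apply_zero (m : ℕ →₀ ℕ) : weight wB m + m 0 = 2 * weight wR m := by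
  induction m using Finsupp.induction_linear with
  | zero => simp
  | add m n hm hn => simp only [map_add, Finsupp.add_apply]; omega
  | single i e =>
    rcases i with _ | j
    · simp [weight_single, wB, wR, two_mul]
    · simp [weight_single, wB, wR, pow_succ, mul_comm, mul_left_comm]

noncomputable def sqExp : (ℕ →₀ ℕ) →+ (ℕ →₀ ℕ) :=
  AddMonoidHom.id _ + (singleAddHom 0).comp (applyAddHom 0)

lemma sqExp_apply (m : ℕ →₀ ℕ) : sqExp m = m + single 0 (m 0) := rfl

lemma sqExp_injective : Function.Injective sqExp := by
  intro m n h
  have h0 := DFunLike.congr_fun h 0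
  simp only [sqExp_apply, Finsupp.add_apply, single_eq_same] at h0
  ext i
  rcases eq_or_ne i 0 with rfl | hi
  · omega
  · simpa [sqExp_apply, hi] using DFunLike.congr_fun h i

lemma weight_sqExp (w : ℕ → ℕ) (m : ℕ →₀ ℕ) : weight w (sqExp m) = weight w m + m 0 * w 0 := by
  simp [sqExp_apply, weight_single]

lemma weight_wB_sqExp (m : ℕ →₀ ℕ) : weight wB (sqExp m) = 2 * weight wR m := by
  rw [weight_sqExp, ← weight_wB_add_apply_zero]
  simp [wB]

lemma weight_dB_sqExp (m : ℕ →₀ ℕ) : weight dB (sqExp m) = weight dR m := by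
  simp [weight_sqExp, dB_eq_dR, dR]

lemma exists_sqExp_eq {m' : ℕ →₀ ℕ} (h : Even (weight wB m')) : ∃ m, sqExp m = m' := by
  have hparity := weight_wB_add_apply_zero m'
  obtain ⟨n, hn⟩ := h
  refine ⟨m'.update 0 (m' 0 / 2), ?_⟩
  ext i
  rcases eq_or_ne i 0 with rfl | hi
  · simp only [sqExp_apply, coe_update, Function.update_self, Finsupp.coe_add, Pi.add_apply,
      single_eq_same]
    omega
  · simp [sqExp_apply, hi]

noncomputable def squareG : P →ₐ[F2] P := AddMonoidAlgebra.mapDomainAlgHom F2 F2 sqExp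

lemma squareG_monomial (m : ℕ →₀ ℕ) (c : F2) :
    squareG (monomial m c) = monomial (sqExp m) c := by
  simp [squareG, monomial]

lemma squareG_X_zero : squareG (X 0) = X 0 ^ 2 := by
  rw [X, squareG_monomial, monomial_pow, sqExp_apply]
  simp [← single_add]

lemma squareG_X_succ (i : ℕ) : squareG (X (i + 1)) = X (i + 1) := by
  rw [X, squareG_monomial, sqExp_apply]
  simp

lemma squareG_injective : Function.Injective squareG :=
  AddMonoidAlgebra.mapDomain_injective sqExp_injective

lemma coeff_sqExp_squareG (e : ℕ →₀ ℕ) (y : P) : coeff (sqExp e) (squareG y) = coeff e y := by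
  induction y using MvPolynomial.induction_on' with
  | monomial e' c => simp [squareG_monomial, coeff_monomial, sqExp_injective.eq_iff]
  | add y z hy hz => simp [hy, hz]

lemma map_squareG_le {w w' : ℕ → ℕ} {n n' : ℕ}
    (h : ∀ m, weight w m = n → weight w' (sqExp m) = n') :
    (weightedHomogeneousSubmodule F2 w n).map squareG.toLinearMap ≤
      weightedHomogeneousSubmodule F2 w' n' := by
  rw [weightedHomogeneousSubmodule_eq_span, weightedHomogeneousSubmodule_eq_span,
    Submodule.map_span_le]
  rintro _ ⟨m, hm, rfl⟩
  exact Submodule.subset_span ⟨sqExp m, h m hm, by simp [squareG_monomial]⟩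

lemma map_squareG_weightedHomogeneousSubmodule (n : ℕ) :
    (weightedHomogeneousSubmodule F2 wR n).map squareG.toLinearMap =
      weightedHomogeneousSubmodule F2 wB (2 * n) := by
  refine le_antisymm (map_squareG_le fun m hm => by rw [weight_wB_sqExp, hm]) ?_
  rw [weightedHomogeneousSubmodule_eq_span wB, Submodule.span_le]
  rintro _ ⟨m', hm', rfl⟩
  obtain ⟨m, rfl⟩ := exists_sqExp_eq (hm' ▸ even_two_mul n)
  refine ⟨monomial m 1, isWeightedHomogeneous_monomial _ _ _ ?_, squareG_monomial m 1⟩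
  have := weight_wB_sqExp m
  simp only [Set.mem_ofPred_eq] at hm'
  omega

lemma isWeightedHomogeneous_squareG {x : P} {d : ℕ} (hx : IsWeightedHomogeneous dR x d) :
    IsWeightedHomogeneous dB (squareG x) d :=
  map_squareG_le (fun m hm => by rw [weight_dB_sqExp, hm]) ⟨x, hx, rfl⟩

lemma lcoeff_X_one_pow_three : lcoeff F2 (sqExp (single 0 1 + single 2 1)) (X 1 ^ 3) = 0 := by
  rw [lcoeff_apply, ← squareG_X_succ, ← map_pow, coeff_sqExp_squareG, X_pow_eq_monomial,
    coeff_monomial, if_neg fun h => by simpa using DFunLike.congr_fun h 2]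

noncomputable def ratToBraid : P →ₗ[F2] P :=
  (LinearEquiv.transvection lcoeff_X_one_pow_three : P →ₗ[F2] P) ∘ₗ squareG.toLinearMap

lemma ratToBraid_apply (y : P) :
    ratToBraid y = squareG y + coeff (single 0 1 + single 2 1) y • X 1 ^ 3 := by
  simp only [ratToBraid, LinearMap.comp_apply, AlgHom.toLinearMap_apply, LinearEquiv.coe_coe,
    LinearEquiv.transvection.apply, lcoeff_apply, coeff_sqExp_squareG]

lemma ratToBraid_injective : Function.Injective ratToBraid :=
  fun _ _ h => squareG_injective ((LinearEquiv.transvection lcoeff_X_one_pow_three).injective h)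

lemma image_ratToBraid : ratToBraid '' (spanWt wR 3 : Set P) = spanWt wB 6 := by
  have hv : IsWeightedHomogeneous wB (X 1 ^ 3 : P) (weight wB (sqExp (single 0 1 + single 2 1))) :=
    by simpa [weight_wB_sqExp, weight_single, wB, wR] using (isWeightedHomogeneous_X F2 wB 1).pow 3
  rw [ratToBraid, LinearMap.coe_comp, Set.image_comp, spanWt_eq_weightedHomogeneousSubmodule,
    spanWt_eq_weightedHomogeneousSubmodule, ← Submodule.map_coe,
    map_squareG_weightedHomogeneousSubmodule, ← Submodule.map_coe,
    map_transvection_weightedHomogeneousSubmodule _ hv]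

lemma homog_ratToBraid {d : ℕ} {x : P} (hx : Homog dR d x) : Homog dB d (ratToBraid x) := by
  have hv : IsWeightedHomogeneous dB (X 1 ^ 3 : P) (weight dB (sqExp (single 0 1 + single 2 1))) :=
    by simpa [weight_dB_sqExp, weight_single, dB, dR] using (isWeightedHomogeneous_X F2 dB 1).pow 3
  rw [homog_iff_isWeightedHomogeneous] at hx ⊢
  exact hv.transvection_lcoeff (isWeightedHomogeneous_squareG hx)

lemma ratToBraid_X_zero_pow_mul_X_one_pow (a b : ℕ) :
    ratToBraid (X 0 ^ a * X 1 ^ b) = X 0 ^ (2 * a) * X 1 ^ b := by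
  have hcoeff : coeff (single 0 1 + single 2 1) (X 0 ^ a * X 1 ^ b : P) = 0 := by
    rw [X_pow_eq_monomial, ← monomial_add_single, coeff_monomial,
      if_neg fun h => by simpa using DFunLike.congr_fun h 2]
  rw [ratToBraid_apply, hcoeff, zero_smul, add_zero, map_mul, map_pow, map_pow, squareG_X_zero,
    squareG_X_succ, ← pow_mul]

lemma ratToBraid_X_zero_mul_X_two : ratToBraid (X 0 * X 2) = X 1 ^ 3 + X 0 ^ 2 * X 2 := by
  have hcoeff : coeff (single 0 1 + single 2 1) (X 0 * X 2 : P) = 1 := by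
    simp [X, monomial_mul, coeff_monomial]
  rw [ratToBraid_apply, hcoeff, one_smul, map_mul, squareG_X_zero, squareG_X_succ, add_comm]

lemma ratToBraid_X_one_mul_X_two : ratToBraid (X 1 * X 2) = X 1 * X 2 := by
  have hcoeff : coeff (single 0 1 + single 2 1) (X 1 * X 2 : P) = 0 := by
    rw [X, X, monomial_mul, coeff_monomial, if_neg fun h => by simpa using DFunLike.congr_fun h 0]
  rw [ratToBraid_apply, hcoeff, zero_smul, add_zero, map_mul, squareG_X_succ, squareG_X_succ]

lemma monomial_cases_of_weight_wR_eq_three {m : ℕ →₀ ℕ} (h : weight wR m = 3) :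
    (∃ a b, monomial m (1 : F2) = X 0 ^ a * X 1 ^ b) ∨ monomial m (1 : F2) = X 0 * X 2 ∨
      monomial m (1 : F2) = X 1 * X 2 := by
  have hvanish (j : ℕ) : m (j + 3) = 0 := by
    by_contra hj
    have h4 : 2 ^ 2 ≤ wR (j + 3) := Nat.pow_le_pow_right (by norm_num) (by omega)
    have := le_weight_of_ne_zero' wR hj
    omega
  have hm : m = single 0 (m 0) + single 1 (m 1) + single 2 (m 2) := by
    ext (_ | _ | _ | j) <;> simp [hvanish]
  have hsum : m 0 + m 1 + 2 * m 2 = 3 := by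
    rw [hm] at h
    simpa [weight_single, wR, mul_comm] using h
  rw [hm, monomial_add_single, monomial_add_single, ← X_pow_eq_monomial]
  obtain h2 | h2 : m 2 = 0 ∨ m 2 = 1 := by omega
  · exact .inl ⟨m 0, m 1, by simp [h2]⟩
  · obtain ⟨h0, h1⟩ | ⟨h0, h1⟩ : m 0 = 1 ∧ m 1 = 0 ∨ m 0 = 0 ∧ m 1 = 1 := by omega
    · exact .inr (.inl (by simp [h0, h1, h2]))
    · exact .inr (.inr (by simp [h0, h1, h2]))

/- `reduce_mod_char!` finds the characteristic only through a hypothesis in the local context. -/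
lemma charP_two : CharP (P ⊗[F2] P) 2 :=
  charP_of_injective_algebraMap (algebraMap F2 (P ⊗[F2] P)).injective 2

/- Writing `a ⊗ b` as `(a ⊗ 1) * (1 ⊗ b)` turns identities in `P ⊗ P` into polynomial identities
in the six atoms `X i ⊗ 1`, `1 ⊗ X i`, which `ring` and `reduce_mod_char!` decide. -/
lemma tmul_eq_includeLeft_mul_includeRight (a b : P) :
    a ⊗ₜ[F2] b =
      Algebra.TensorProduct.includeLeft (S := F2) a * Algebra.TensorProduct.includeRight b := by
  simp

variable {Q : P →ₗ[F2] P} {ψR ψB : P →ₐ[F2] P ⊗[F2] P}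

lemma psiB_ratToBraid_X_zero_pow_mul_X_one_pow (hψR : IsPsiR Q ψR) (hψB : IsPsiB ψB) (a b : ℕ) :
    ψB (ratToBraid (X 0 ^ a * X 1 ^ b)) =
      TensorProduct.map ratToBraid ratToBraid (ψR (X 0 ^ a * X 1 ^ b)) := by
  simp only [ratToBraid_X_zero_pow_mul_X_one_pow, map_mul, map_pow, hψB.1, hψB.map_X_one, hψR.1,
    hψR.2.1, add_pow, Finset.mul_sum, ← nsmul_eq_mul', Algebra.TensorProduct.tmul_pow,
    mul_smul_comm, Algebra.TensorProduct.tmul_mul_tmul, map_sum, map_nsmul, map_tmul]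
  refine Finset.sum_congr rfl fun k _ => ?_
  rw [show X 0 ^ a * (X 0 ^ k * X 1 ^ (b - k)) = X 0 ^ (a + k) * X 1 ^ (b - k) by ring,
    show X 0 ^ a * (X 1 ^ k * X 0 ^ (b - k)) = X 0 ^ (a + (b - k)) * X 1 ^ k by ring,
    ratToBraid_X_zero_pow_mul_X_one_pow, ratToBraid_X_zero_pow_mul_X_one_pow]
  ring_nf

/- In the coproduct tables below, the exponents `^ 0` and `^ 1` are written out so that
`ratToBraid_X_zero_pow_mul_X_one_pow` applies to every tensor factor. -/
lemma psiB_ratToBraid_X_zero_mul_X_two (hQ : IsQ Q) (hψR : IsPsiR Q ψR) (hψB : IsPsiB ψB) :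
    ψB (ratToBraid (X 0 * X 2)) = TensorProduct.map ratToBraid ratToBraid (ψR (X 0 * X 2)) := by
  have := charP_two
  have hR : ψR (X 0 * X 2) = (X 0 ^ 3 * X 1 ^ 0) ⊗ₜ[F2] (X 0 * X 2)
      + (X 0 ^ 2 * X 1 ^ 1) ⊗ₜ[F2] (X 0 ^ 1 * X 1 ^ 2)
      + (X 0 ^ 1 * X 1 ^ 2) ⊗ₜ[F2] (X 0 ^ 2 * X 1 ^ 1)
      + (X 0 * X 2) ⊗ₜ[F2] (X 0 ^ 3 * X 1 ^ 0) := by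
    simp only [map_mul, hψR.1, hψR.map_X_two hQ, tmul_eq_includeLeft_mul_includeRight, map_pow]
    ring
  simp only [hR, map_add, map_tmul, ratToBraid_X_zero_pow_mul_X_one_pow,
    ratToBraid_X_zero_mul_X_two]
  simp only [map_add, map_mul, map_pow, hψB.1, hψB.map_X_one, hψB.map_X_two,
    tmul_eq_includeLeft_mul_includeRight]
  ring_nf
  reduce_mod_char!

lemma psiB_ratToBraid_X_one_mul_X_two (hQ : IsQ Q) (hψR : IsPsiR Q ψR) (hψB : IsPsiB ψB) :
    ψB (ratToBraid (X 1 * X 2)) = TensorProduct.map ratToBraid ratToBraid (ψR (X 1 * X 2)) := by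
  have := charP_two
  have hR : ψR (X 1 * X 2) = (X 0 ^ 3 * X 1 ^ 0) ⊗ₜ[F2] (X 1 * X 2)
      + (X 0 ^ 2 * X 1 ^ 1) ⊗ₜ[F2] (X 0 ^ 0 * X 1 ^ 3) + (X 0 * X 2) ⊗ₜ[F2] (X 0 ^ 2 * X 1 ^ 1)
      + (X 0 ^ 2 * X 1 ^ 1) ⊗ₜ[F2] (X 0 * X 2) + (X 0 ^ 0 * X 1 ^ 3) ⊗ₜ[F2] (X 0 ^ 2 * X 1 ^ 1)
      + (X 1 * X 2) ⊗ₜ[F2] (X 0 ^ 3 * X 1 ^ 0) := by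
    simp only [map_mul, hψR.2.1, hψR.map_X_two hQ, tmul_eq_includeLeft_mul_includeRight, map_pow]
    ring_nf
    reduce_mod_char!
  simp only [hR, map_add, map_tmul, ratToBraid_X_zero_pow_mul_X_one_pow,
    ratToBraid_X_zero_mul_X_two, ratToBraid_X_one_mul_X_two]
  simp only [map_add, map_mul, map_pow, hψB.map_X_one, hψB.map_X_two,
    tmul_eq_includeLeft_mul_includeRight]
  ring_nf
  reduce_mod_char!

lemma psiB_ratToBraid (hQ : IsQ Q) (hψR : IsPsiR Q ψR) (hψB : IsPsiB ψB) {x : P}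
    (hx : x ∈ spanWt wR 3) :
    ψB (ratToBraid x) = TensorProduct.map ratToBraid ratToBraid (ψR x) := by
  induction hx using Submodule.span_induction with
  | mem y hy =>
    obtain ⟨m, hm, rfl⟩ := hy
    rw [mwt_eq_weight] at hm
    obtain ⟨a, b, hab⟩ | h02 | h12 := monomial_cases_of_weight_wR_eq_three hm
    · rw [hab, psiB_ratToBraid_X_zero_pow_mul_X_one_pow hψR hψB]
    · rw [h02, psiB_ratToBraid_X_zero_mul_X_two hQ hψR hψB]
    · rw [h12, psiB_ratToBraid_X_one_mul_X_two hQ hψR hψB]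
  | zero => simp
  | add y z _ _ hy hz => simp only [map_add, hy, hz]
  | smul c y _ hy => simp only [map_smul, hy]

end RatBraid

/-- There exists an 𝔽₂-linear map `Φ : R → B` that (i) restricts
to an injection of `A₃` with image `B₆`, (ii) sends elements of `A₃` homogeneous of
dimension `d` to elements homogeneous of dimension `d`, and (iii) satisfies
`ψ_B(Φ(x)) = (Φ ⊗ Φ)(ψ_R(x))` on `A₃`.  (So `H_*(Rat₃; 𝔽₂) ≅ H_*(Bβ₆; 𝔽₂)` as
graded coalgebras.) -/
theorem rat3_iso_braid6
    (Q : P →ₗ[F2] P) (hQ : IsQ Q)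
    (ψR : P →ₐ[F2] P ⊗[F2] P) (hψR : IsPsiR Q ψR)
    (ψB : P →ₐ[F2] P ⊗[F2] P) (hψB : IsPsiB ψB) :
    ∃ Φ : P →ₗ[F2] P,
      (Set.InjOn ⇑Φ (spanWt wR 3 : Set P) ∧
        ⇑Φ '' (spanWt wR 3 : Set P) = (spanWt wB 6 : Set P)) ∧
      (∀ (d : ℕ), ∀ x ∈ spanWt wR 3, Homog dR d x → Homog dB d (Φ x)) ∧
      (∀ x ∈ spanWt wR 3, ψB (Φ x) = TensorProduct.map Φ Φ (ψR x)) :=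
  ⟨RatBraid.ratToBraid, ⟨RatBraid.ratToBraid_injective.injOn, RatBraid.image_ratToBraid⟩,
    fun _ _ _ => RatBraid.homog_ratToBraid, fun _ => RatBraid.psiB_ratToBraid hQ hψR hψB⟩
end
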